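/- A matrix Q ∈ M_{2n}(ℂ) is both unitary and perplectic if and only if Q = [V R_{2n}VR_n] for some V ∈ M_{2n×n}(ℂ) with VᴴV = I_n and VᴴR_{2n}V = 0. -/

import Mathlib

open Matrix

/-- The `n × n` reversal (anti-identity) matrix. -/
def Rrev (n : ℕ) : Matrix (Fin n) (Fin n) ℂ :=
  Matrix.of fun i j => if j = i.rev then 1 else 0

/-- The `2n × 2n` reversal (anti-identity) matrix, in block form. -/
def R2 (n : ℕ) : Matrix (Fin n ⊕ Fin n) (Fin n ⊕ Fin n) ℂ :=
  Matrix.fromBlocks 0 (Rrev n) (Rrev n) 0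

/-! A unitary `Q` is perplectic iff it commutes with `R₂ₙ`, and commuting with `R₂ₙ` forces the
second block column of `Q = [V W]` to be `W = R₂ₙ V Rₙ`. For `Q` of that shape, `QᴴQ` has blocks
`VᴴV`, `VᴴR₂ₙV Rₙ`, `Rₙ VᴴR₂ₙV`, `Rₙ VᴴV Rₙ`, so `QᴴQ = I` amounts to `VᴴV = I` and `VᴴR₂ₙV = 0`. -/

namespace Matrix

variable {R m k : Type*} [Fintype m] [Fintype k]

theorem mul_mul_eq_self_iff_commute [CommRing R] [DecidableEq m] {B Q M : Matrix m m R}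
    (h : B * Q = 1) : B * M * Q = M ↔ Commute M Q := by
  have hQB : Q * B = 1 := mul_eq_one_comm.mp h
  constructor
  · intro hM
    calc M * Q = Q * (B * M * Q) := by simp only [← Matrix.mul_assoc, hQB, Matrix.one_mul]
      _ = Q * M := by rw [hM]
  · intro hM
    rw [Matrix.mul_assoc, hM.eq, ← Matrix.mul_assoc, h, Matrix.one_mul]

theorem mul_fromCols_eq_fromCols_mul_antidiag_iff [Ring R] [DecidableEq m] [DecidableEq k]
    {P : Matrix m m R} {S : Matrix k k R} (hP : P * P = 1) (hS : S * S = 1)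
    (V W : Matrix m k R) :
    P * fromCols V W = fromCols V W * fromBlocks 0 S S 0 ↔ W = P * V * S := by
  simp only [mul_fromCols, fromCols_mul_fromBlocks, Matrix.mul_zero, zero_add, add_zero,
    fromCols_ext_iff]
  constructor
  · rintro ⟨hV, -⟩
    rw [hV, Matrix.mul_assoc, hS, Matrix.mul_one]
  · rintro rfl
    simp only [Matrix.mul_assoc, hS, Matrix.mul_one, ← Matrix.mul_assoc P P, hP,
      Matrix.one_mul, and_self]

theorem conjTranspose_fromCols_mul_fromCols_eq_one_iff [CommRing R] [StarRing R]
    [DecidableEq m] [DecidableEq k] {P : Matrix m m R} {S : Matrix k k R}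
    (hPh : Pᴴ = P) (hP : P * P = 1) (hSh : Sᴴ = S) (hS : S * S = 1) (V : Matrix m k R) :
    (fromCols V (P * V * S))ᴴ * fromCols V (P * V * S) = 1 ↔
      Vᴴ * V = 1 ∧ Vᴴ * P * V = 0 := by
  have hW : (P * V * S)ᴴ = S * Vᴴ * P := by
    simp only [conjTranspose_mul, hPh, hSh, Matrix.mul_assoc]
  have hWW : S * Vᴴ * P * (P * V * S) = S * (Vᴴ * V) * S := by
    simp only [Matrix.mul_assoc, ← Matrix.mul_assoc P P, hP, Matrix.one_mul]
  rw [conjTranspose_fromCols_eq_fromRows_conjTranspose, fromRows_mul_fromCols, hW, hWW,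
    ← fromBlocks_one, fromBlocks_inj]
  constructor
  · rintro ⟨hVV, hVW, -, -⟩
    refine ⟨hVV, ?_⟩
    simpa only [← Matrix.mul_assoc, Matrix.mul_assoc _ S S, hS, Matrix.mul_one, Matrix.zero_mul]
      using congrArg (· * S) hVW
  · rintro ⟨hVV, hVPV⟩
    refine ⟨hVV, ?_, ?_, ?_⟩
    · rw [← Matrix.mul_assoc, ← Matrix.mul_assoc, hVPV, Matrix.zero_mul]
    · rw [Matrix.mul_assoc, Matrix.mul_assoc, ← Matrix.mul_assoc Vᴴ, hVPV, Matrix.mul_zero]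
    · rw [hVV, Matrix.mul_one, hS]

end Matrix

theorem Rrev_conjTranspose (n : ℕ) : (Rrev n)ᴴ = Rrev n := by
  ext i j
  have hrev : i = j.rev ↔ j = i.rev := eq_comm.trans Fin.rev_eq_iff
  simp only [Rrev, conjTranspose_apply, of_apply, hrev]
  split <;> simp

theorem Rrev_mul_Rrev (n : ℕ) : Rrev n * Rrev n = 1 := by
  ext i j
  simp only [Rrev, mul_apply, of_apply, one_apply, ite_mul, one_mul, zero_mul,
    Finset.sum_ite_eq', Finset.mem_univ, if_true, Fin.rev_rev, eq_comm]

theorem R2_conjTranspose (n : ℕ) : (R2 n)ᴴ = R2 n := by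
  simp [R2, fromBlocks_conjTranspose, Rrev_conjTranspose]

theorem R2_mul_R2 (n : ℕ) : R2 n * R2 n = 1 := by
  simp [R2, fromBlocks_multiply, Rrev_mul_Rrev, ← fromBlocks_one]

theorem R2_commute_fromCols_iff (n : ℕ) (V W : Matrix (Fin n ⊕ Fin n) (Fin n) ℂ) :
    Commute (R2 n) (fromCols V W) ↔ W = R2 n * V * Rrev n :=
  mul_fromCols_eq_fromCols_mul_antidiag_iff (R2_mul_R2 n) (Rrev_mul_Rrev n) V W

theorem stmt14 (n : ℕ) (Q : Matrix (Fin n ⊕ Fin n) (Fin n ⊕ Fin n) ℂ) :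
    (Qᴴ * Q = 1 ∧ Qᴴ * R2 n * Q = R2 n) ↔
    ∃ V : Matrix (Fin n ⊕ Fin n) (Fin n) ℂ,
      Vᴴ * V = 1 ∧ Vᴴ * R2 n * V = 0 ∧
      Q = Matrix.fromCols V (R2 n * V * Rrev n) := by
  have hUnitary := conjTranspose_fromCols_mul_fromCols_eq_one_iff (R2_conjTranspose n)
    (R2_mul_R2 n) (Rrev_conjTranspose n) (Rrev_mul_Rrev n)
  rw [and_congr_right mul_mul_eq_self_iff_commute]
  obtain ⟨V, W, rfl⟩ : ∃ V W, Q = fromCols V W := ⟨_, _, (fromCols_toCols Q).symm⟩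
  rw [R2_commute_fromCols_iff]
  constructor
  · rintro ⟨hQ, rfl⟩
    obtain ⟨hVV, hVRV⟩ := (hUnitary V).mp hQ
    exact ⟨V, hVV, hVRV, rfl⟩
  · rintro ⟨V', hVV, hVRV, hQ⟩
    obtain ⟨rfl, rfl⟩ := (fromCols_ext_iff _ _ _ _).mp hQ
    exact ⟨(hUnitary V).mpr ⟨hVV, hVRV⟩, rfl⟩
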